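/- Let A be a max-automaton over Σ. Let (x_i)_{i∈ℕ} and (x_i')_{i∈ℕ} be sequences of words in Σ^*, with infinitely many x_i nonempty and infinitely many x_i' nonempty (so that both concatenations are infinite words), and let (r_i)_{i∈ℕ} be a rate such that x_i ≡_{r_i} x_i' for all i. Then x_0x_1x_2⋯ ∈ L(A) if and only if x_0'x_1'x_2'⋯ ∈ L(A). -/

import Mathlib

/-- `listPrefix u i` is the concatenation `u 0 ++ u 1 ++ ⋯ ++ u (i-1)`. -/
def listPrefix {A : Type*} (u : ℕ → List A) : ℕ → List A
  | 0 => []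
  | n + 1 => listPrefix u n ++ u n

/-- The infinite word obtained by concatenating the blocks `u 0, u 1, u 2, …`
(well-defined on position `n` as soon as some finite concatenation has length `> n`). -/
noncomputable def flattenInf {A : Type*} [Nonempty A] (u : ℕ → List A) (n : ℕ) : A :=
  letI := Classical.dec (∃ k, n < (listPrefix u k).length)
  if h : ∃ k, n < (listPrefix u k).length then
    (listPrefix u h.choose).getD n (Classical.arbitrary A)
  else Classical.arbitrary A

/-- Counter operations over a set `C` of counters. -/
inductive CounterOp (C : Type*) where
  | inc : C → CounterOp C
  | reset : C → CounterOp C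
  | max : C → C → C → CounterOp C

/-- Applying a single counter operation to a counter valuation. -/
def applyOp {C : Type*} [DecidableEq C] (ν : C → ℕ) : CounterOp C → C → ℕ
  | .inc c => Function.update ν c (ν c + 1)
  | .reset c => Function.update ν c 0
  | .max c c₀ c₁ => Function.update ν c (Nat.max (ν c₀) (ν c₁))

/-- Applying a finite sequence of counter operations to a counter valuation. -/
def applyOps {C : Type*} [DecidableEq C] (ν : C → ℕ) : List (CounterOp C) → C → ℕ
  | [] => ν
  | op :: π => applyOps (applyOp ν op) π

/-- The transfer relation of a single counter operation. -/
def opTransfers {C : Type*} : CounterOp C → C → C → Prop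
  | .inc _, c, d => c = d
  | .reset e, c, d => c = d ∧ c ≠ e
  | .max e c₀ c₁, c, d => (c = d ∧ c ≠ e) ∨ ((c = c₀ ∨ c = c₁) ∧ d = e)

/-- `Transfers π c d`: the sequence `π` of counter operations transfers counter `c`
to counter `d`. -/
def Transfers {C : Type*} : List (CounterOp C) → C → C → Prop
  | [], c, d => c = d
  | op :: π, c, d => ∃ e, opTransfers op c e ∧ Transfers π e d

/-- `TransfersWith π c d m`: `π` transfers `c` to `d` with `m` increments, i.e. `π`
decomposes as `π₀ (inc e₁) π₁ ⋯ (inc e_m) π_m` with `π₀` transferring `c` to `e₁`,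
`π_j` transferring `e_j` to `e_{j+1}`, and `π_m` transferring `e_m` to `d`. -/
inductive TransfersWith {C : Type*} : List (CounterOp C) → C → C → ℕ → Prop where
  | zero {π : List (CounterOp C)} {c d : C} :
      Transfers π c d → TransfersWith π c d 0
  | step {π₀ π : List (CounterOp C)} {c e d : C} {m : ℕ} :
      Transfers π₀ c e → TransfersWith π e d m →
      TransfersWith (π₀ ++ CounterOp.inc e :: π) c d (m + 1)

/-- `π` is a `c`-trace of length `m`: it transfers some counter to `c` with `m` increments. -/
def IsTrace {C : Type*} (π : List (CounterOp C)) (c : C) (m : ℕ) : Prop :=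
  ∃ c', TransfersWith π c' c m

/-- A (deterministic, complete) max-automaton with states `Q`, counters `C` and
input alphabet `S`: each transition is labeled by a finite sequence of counter
operations, and the acceptance condition is a boolean combination of the
per-counter conditions "`limsup ρ_c < ∞`". -/
structure MaxAutomaton (S Q C : Type*) where
  init : Q
  step : Q → S → Q
  label : Q → S → List (CounterOp C)
  acc : (C → Prop) → Prop

namespace MaxAutomaton

variable {S Q C : Type*}

/-- The state of the (unique) run on `α` after `n` letters. -/
def stateAt (A : MaxAutomaton S Q C) (α : ℕ → S) : ℕ → Q
  | 0 => A.init
  | n + 1 => A.step (stateAt A α n) (α n)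

/-- The counter valuation reached on the run on `α` after applying all operations
of the first `n` transition labels, starting from the zero valuation. -/
def valSeq [DecidableEq C] (A : MaxAutomaton S Q C) (α : ℕ → S) : ℕ → C → ℕ
  | 0 => fun _ => 0
  | n + 1 => applyOps (valSeq A α n) (A.label (stateAt A α n) (α n))

/-- The run of `A` on `α` is accepting iff the acceptance condition is satisfied by
the assignment mapping counter `c` to true iff `limsup ρ_c < ∞`. -/
def Accepts [DecidableEq C] (A : MaxAutomaton S Q C) (α : ℕ → S) : Prop :=
  A.acc fun c => Filter.limsup (fun n => ((valSeq A α n c : ℕ) : ℕ∞)) Filter.atTop < ⊤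

/-- The language of the max-automaton `A`. -/
def Lang [DecidableEq C] (A : MaxAutomaton S Q C) : Set (ℕ → S) :=
  { α | A.Accepts α }

/-- The flattening of the labels of the first `n` transitions of the run of `A` on `α`. -/
def labelSeq (A : MaxAutomaton S Q C) (α : ℕ → S) : ℕ → List (CounterOp C)
  | 0 => []
  | n + 1 => labelSeq A α n ++ A.label (stateAt A α n) (α n)

/-- The run of `A` on `α` contains `π`: some prefix of the run ends with `π`. -/
def RunContains (A : MaxAutomaton S Q C) (α : ℕ → S) (π : List (CounterOp C)) : Prop :=
  ∃ n, π <:+ A.labelSeq α n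

/-- The extended transition function `δ* : Q × Σ* → Q`. -/
def extStep (A : MaxAutomaton S Q C) : Q → List S → Q
  | q, [] => q
  | q, a :: x => extStep A (A.step q a) x

/-- `ℓ(q, x)`: the sequence of transition labels along the run of `A` on `x` from `q`. -/
def labelsFrom (A : MaxAutomaton S Q C) : Q → List S → List (List (CounterOp C))
  | _, [] => []
  | q, a :: x => A.label q a :: labelsFrom A (A.step q a) x

end MaxAutomaton

/-- The flattening of a sequence of transition labels into a single sequence of
counter operations. -/
def flatLabels {C : Type*} (l : List (List (CounterOp C))) : List (CounterOp C) :=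
  l.foldr (· ++ ·) []

/-- `l` has an infix whose flattening has a suffix that is a `c`-trace of length `m`. -/
def CondInfixTrace {C : Type*} (l : List (List (CounterOp C))) (c : C) (m : ℕ) : Prop :=
  ∃ μ, μ <:+: l ∧ ∃ π, π <:+ flatLabels μ ∧ IsTrace π c m

/-- The flattening of `l` has a suffix that is a `c`-trace of length `m`. -/
def CondSuffixTrace {C : Type*} (l : List (List (CounterOp C))) (c : C) (m : ℕ) : Prop :=
  ∃ π, π <:+ flatLabels l ∧ IsTrace π c m

/-- The flattening of `l` transfers `c` to `d` with `m` increments. -/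
def CondTransfer {C : Type*} (l : List (List (CounterOp C))) (c d : C) (m : ℕ) : Prop :=
  TransfersWith (flatLabels l) c d m

/-- `l` has a prefix whose flattening transfers `c` to `d` with `m` increments. -/
def CondPrefixTransfer {C : Type*} (l : List (List (CounterOp C))) (c d : C) (m : ℕ) : Prop :=
  ∃ μ, μ <+: l ∧ TransfersWith (flatLabels μ) c d m

/-- The equivalence `≡_m^ops` on sequences of transition labels. -/
def EqOps {C : Type*} (m : ℕ) (l l' : List (List (CounterOp C))) : Prop :=
  ∀ (c d : C) (m' : ℕ), m' ≤ m →
    (CondInfixTrace l c m' ↔ CondInfixTrace l' c m') ∧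
    (CondSuffixTrace l c m' ↔ CondSuffixTrace l' c m') ∧
    (CondTransfer l c d m' ↔ CondTransfer l' c d m') ∧
    (CondPrefixTransfer l c d m' ↔ CondPrefixTransfer l' c d m')

/-- The equivalence `≡_m` on finite words: same transition profile and
`≡_m^ops`-equivalent label sequences from every state. -/
def EqWord {S Q C : Type*} (A : MaxAutomaton S Q C) (m : ℕ) (x x' : List S) : Prop :=
  (∀ q, A.extStep q x = A.extStep q x') ∧
  ∀ q, EqOps m (A.labelsFrom q x) (A.labelsFrom q x')

/-! ### Auxiliary lemmas -/

section Aux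

variable {C : Type*}

open List in
theorem suffix_append_cases {α : Type*} {σ a b : List α} (h : σ <:+ a ++ b) :
    σ <:+ b ∨ ∃ u, u <:+ a ∧ σ = u ++ b := by
  obtain ⟨t, ht⟩ := h
  rcases List.append_eq_append_iff.mp ht with ⟨w, hw1, hw2⟩ | ⟨w, hw1, hw2⟩
  · right
    exact ⟨w, ⟨t, hw1.symm⟩, hw2⟩
  · left
    exact ⟨w, hw2.symm⟩

theorem suffix_of_suffix_of_suffix_le {α : Type*} {σ R T : List α} (h : σ <:+ T)
    (hR : R <:+ T) (hlen : σ.length ≤ R.length) : σ <:+ R := by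
  obtain ⟨t, ht⟩ := hR
  rcases suffix_append_cases (ht ▸ h) with h' | ⟨u, hu, rfl⟩
  · exact h'
  · have : u = [] := by
      have := (@List.length_append _ u R) ▸ hlen
      simpa using List.eq_nil_of_length_eq_zero (by omega)
    simp [this]

theorem flatLabels_append (u v : List (List (CounterOp C))) :
    flatLabels (u ++ v) = flatLabels u ++ flatLabels v := by
  induction u with
  | nil => rfl
  | cons a u ih => simp [flatLabels, List.foldr_cons] at ih ⊢; simp [ih]

@[simp] theorem flatLabels_nil : flatLabels ([] : List (List (CounterOp C))) = [] := rfl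

theorem listPrefix_add {A : Type*} (u : ℕ → List A) (a b : ℕ) :
    listPrefix u (a + b) = listPrefix u a ++ listPrefix (fun j => u (a + j)) b := by
  induction b with
  | zero => simp [listPrefix]
  | succ b ih => rw [← Nat.add_assoc, listPrefix, listPrefix, ih, List.append_assoc]

theorem listPrefix_succ_left {A : Type*} (u : ℕ → List A) (n : ℕ) :
    listPrefix u (n + 1) = u 0 ++ listPrefix (fun j => u (1 + j)) n := by
  have := listPrefix_add u 1 n
  rw [Nat.add_comm 1 n] at this
  rw [this]; rfl

theorem listPrefix_congr {A : Type*} {u v : ℕ → List A} {n : ℕ}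
    (h : ∀ j < n, u j = v j) : listPrefix u n = listPrefix v n := by
  induction n with
  | zero => rfl
  | succ n ih =>
    rw [listPrefix, listPrefix, ih (fun j hj => h j (by omega)), h n (by omega)]

theorem listPrefix_prefix {A : Type*} (u : ℕ → List A) {a b : ℕ} (h : a ≤ b) :
    listPrefix u a <+: listPrefix u b := by
  obtain ⟨k, rfl⟩ := Nat.exists_eq_add_of_le h
  rw [listPrefix_add]; exact ⟨_, rfl⟩

/-! ### Transfers algebra -/

@[simp] theorem Transfers_nil {c d : C} : Transfers ([] : List (CounterOp C)) c d ↔ c = d :=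
  Iff.rfl

theorem Transfers_cons {op : CounterOp C} {π : List (CounterOp C)} {c d : C} :
    Transfers (op :: π) c d ↔ ∃ e, opTransfers op c e ∧ Transfers π e d := Iff.rfl

theorem Transfers.trans_append {π τ : List (CounterOp C)} {a b c : C}
    (h1 : Transfers π a b) (h2 : Transfers τ b c) : Transfers (π ++ τ) a c := by
  induction π generalizing a with
  | nil => cases h1; simpa
  | cons op π ih =>
    obtain ⟨e, he, h1'⟩ := h1
    exact ⟨e, he, ih h1'⟩

theorem Transfers_append {π τ : List (CounterOp C)} {a c : C} :
    Transfers (π ++ τ) a c ↔ ∃ e, Transfers π a e ∧ Transfers τ e c := by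
  constructor
  · intro h
    induction π generalizing a with
    | nil => exact ⟨a, rfl, h⟩
    | cons op π ih =>
      obtain ⟨e, he, h'⟩ := h
      obtain ⟨f, hf1, hf2⟩ := ih h'
      exact ⟨f, ⟨e, he, hf1⟩, hf2⟩
  · rintro ⟨e, h1, h2⟩; exact h1.trans_append h2

theorem TransfersWith.prepend_op {op : CounterOp C} {π : List (CounterOp C)} {a e c : C} {m : ℕ}
    (hop : opTransfers op a e) (h : TransfersWith π e c m) :
    TransfersWith (op :: π) a c m := by
  induction h with
  | zero h => exact .zero ⟨_, hop, h⟩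
  | @step π₀ π _ e' _ _ h1 h2 _ =>
    exact List.cons_append (as := π₀) .. ▸ TransfersWith.step ⟨_, hop, h1⟩ h2

theorem TransfersWith.prepend {π₀ π : List (CounterOp C)} {a e c : C} {m : ℕ}
    (h0 : Transfers π₀ a e) (h : TransfersWith π e c m) :
    TransfersWith (π₀ ++ π) a c m := by
  induction π₀ generalizing a with
  | nil => cases h0; simpa
  | cons op π₀ ih =>
    obtain ⟨f, hf, h0'⟩ := h0
    exact (ih h0').prepend_op hf

theorem TransfersWith.inc_cons {π : List (CounterOp C)} {a c : C} {m : ℕ}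
    (h : TransfersWith π a c m) : TransfersWith (CounterOp.inc a :: π) a c (m + 1) := by
  have := TransfersWith.step (π₀ := []) (Transfers_nil.mpr rfl) h
  simpa using this

theorem TransfersWith.join {π τ : List (CounterOp C)} {a e c : C} {m₁ m₂ : ℕ}
    (h1 : TransfersWith π a e m₁) (h2 : TransfersWith τ e c m₂) :
    TransfersWith (π ++ τ) a c (m₁ + m₂) := by
  induction h1 with
  | zero h => simpa [Nat.add_comm] using h2.prepend h
  | @step π₀ π' _ e' _ m' h0 _ ih =>
    have := TransfersWith.step h0 (ih h2)
    rw [Nat.add_right_comm] at this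
    simpa using this

theorem TransfersWith.extend {π τ : List (CounterOp C)} {a e c : C} {m : ℕ}
    (h1 : TransfersWith π a e m) (h2 : Transfers τ e c) :
    TransfersWith (π ++ τ) a c m := by
  simpa using h1.join (.zero h2)

theorem TransfersWith.cons_inv {op : CounterOp C} {π : List (CounterOp C)} {a c : C} {m : ℕ}
    (h : TransfersWith (op :: π) a c m) :
    (∃ e, opTransfers op a e ∧ TransfersWith π e c m) ∨
      (op = CounterOp.inc a ∧ ∃ m', m = m' + 1 ∧ TransfersWith π a c m') := by
  generalize hρ : op :: π = ρ at h
  rcases h with ⟨h⟩ | @⟨π₀, π', _, e, _, m', h0, h1⟩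
  · subst hρ
    obtain ⟨e, he, h'⟩ := h
    exact .inl ⟨e, he, .zero h'⟩
  · cases π₀ with
    | nil =>
      obtain rfl : a = e := h0
      simp only [List.nil_append, List.cons.injEq] at hρ
      obtain ⟨rfl, rfl⟩ := hρ
      exact .inr ⟨rfl, m', rfl, h1⟩
    | cons b π₀' =>
      simp only [List.cons_append, List.cons.injEq] at hρ
      obtain ⟨rfl, rfl⟩ := hρ
      obtain ⟨d, hd, h0'⟩ := h0
      exact .inl ⟨d, hd, TransfersWith.step h0' h1⟩

end Aux
section Aux2

variable {C : Type*}

theorem TransfersWith.split {π τ : List (CounterOp C)} {a c : C} {m : ℕ}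
    (h : TransfersWith (π ++ τ) a c m) :
    ∃ e m₁ m₂, m₁ + m₂ = m ∧ TransfersWith π a e m₁ ∧ TransfersWith τ e c m₂ := by
  induction π generalizing a m with
  | nil => exact ⟨a, 0, m, Nat.zero_add m, .zero rfl, by simpa using h⟩
  | cons op π ih =>
    rcases ((@List.cons_append _ op π τ) ▸ h).cons_inv with ⟨e, he, h'⟩ | ⟨rfl, m', rfl, h'⟩
    · obtain ⟨f, m₁, m₂, hm, hh1, hh2⟩ := ih h'
      exact ⟨f, m₁, m₂, hm, hh1.prepend_op he, hh2⟩
    · obtain ⟨f, m₁, m₂, hm, hh1, hh2⟩ := ih h'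
      exact ⟨f, m₁ + 1, m₂, by omega, hh1.inc_cons, hh2⟩

theorem TransfersWith.trunc {π : List (CounterOp C)} {a c : C} {m B : ℕ}
    (h : TransfersWith π a c m) (hB : B ≤ m) :
    ∃ σ e, σ <:+ π ∧ TransfersWith σ e c B := by
  induction h with
  | @zero π c d h =>
    obtain rfl : B = 0 := by omega
    exact ⟨π, c, List.suffix_refl π, .zero h⟩
  | @step π₀ π' a' e d m' h0 h1 ih =>
    rcases Nat.lt_or_ge B (m' + 1) with hlt | hge
    · obtain ⟨σ, f, hσ, hT⟩ := ih (by omega)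
      refine ⟨σ, f, hσ.trans ⟨π₀ ++ [CounterOp.inc e], by simp⟩, hT⟩
    · obtain rfl : B = m' + 1 := by omega
      exact ⟨CounterOp.inc e :: π', e, ⟨π₀, rfl⟩, h1.inc_cons⟩

/-- number of increment operations in a sequence -/
def incCount (π : List (CounterOp C)) : ℕ :=
  π.countP fun op => match op with | .inc _ => true | _ => false

theorem incCount_append (π τ : List (CounterOp C)) :
    incCount (π ++ τ) = incCount π + incCount τ := List.countP_append

theorem TransfersWith.le_incCount {π : List (CounterOp C)} {a c : C} {m : ℕ}
    (h : TransfersWith π a c m) : m ≤ incCount π := by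
  induction h with
  | zero => omega
  | @step π₀ π' _ e _ m' _ _ ih =>
    have : incCount (π₀ ++ CounterOp.inc e :: π') = incCount π₀ + (1 + incCount π') := by
      rw [incCount_append]; simp [incCount, List.countP_cons]; omega
    omega

theorem incCount_le_of_sublist {π τ : List (CounterOp C)} (h : List.Sublist π τ) :
    incCount π ≤ incCount τ := h.countP_le

/-! ### Valuation lemmas -/

variable [DecidableEq C]

theorem applyOps_append (ν : C → ℕ) (π τ : List (CounterOp C)) :
    applyOps ν (π ++ τ) = applyOps (applyOps ν π) τ := by
  induction π generalizing ν with
  | nil => rfl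
  | cons op π ih => simp [applyOps, ih]

theorem opTransfers_le {op : CounterOp C} {a e : C} (h : opTransfers op a e) (ν : C → ℕ) :
    ν a ≤ applyOp ν op e := by
  cases op with
  | inc d =>
    obtain rfl : a = e := h
    by_cases hd : a = d <;> simp [applyOp, Function.update, hd]
  | reset d =>
    obtain ⟨rfl, hne⟩ := h
    simp [applyOp, Function.update, hne]
  | max d c₀ c₁ =>
    rcases h with ⟨rfl, hne⟩ | ⟨hor, rfl⟩
    · simp [applyOp, Function.update, hne]
    · rcases hor with rfl | rfl <;> simp [applyOp, Function.update, Nat.le_max_left, Nat.le_max_right]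

theorem Transfers_le {π : List (CounterOp C)} {a c : C} (h : Transfers π a c) (ν : C → ℕ) :
    ν a ≤ applyOps ν π c := by
  induction π generalizing a ν with
  | nil => cases h; exact le_refl _
  | cons op π ih =>
    obtain ⟨e, he, h'⟩ := h
    exact (opTransfers_le he ν).trans (ih h' _)

theorem TransfersWith_le {π : List (CounterOp C)} {a c : C} {m : ℕ}
    (h : TransfersWith π a c m) (ν : C → ℕ) : ν a + m ≤ applyOps ν π c := by
  induction h generalizing ν with
  | zero h => simpa using Transfers_le h ν
  | @step π₀ π' a' e d m' h0 h1 ih =>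
    rw [applyOps_append]
    calc ν a' + (m' + 1) ≤ (applyOps ν π₀ e + 1) + m' := by
          have := Transfers_le h0 ν; omega
      _ ≤ applyOps (applyOps ν π₀) (CounterOp.inc e :: π') d := by
          have h2 := ih (applyOp (applyOps ν π₀) (CounterOp.inc e))
          simp only [applyOps]
          have : applyOp (applyOps ν π₀) (CounterOp.inc e) e = applyOps ν π₀ e + 1 := by
            simp [applyOp, Function.update]
          omega

/-- the value of a counter is realized by some suffix trace -/
theorem exists_suffix_trace (π : List (CounterOp C)) :
    ∀ c, ∃ σ e m, σ <:+ π ∧ TransfersWith σ e c m ∧ applyOps (fun _ => 0) π c ≤ m := by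
  induction π using List.reverseRecOn with
  | nil => exact fun c => ⟨[], c, 0, List.suffix_refl _, .zero rfl, le_refl _⟩
  | append_singleton π op ih =>
    intro c
    rw [applyOps_append]
    set V := applyOps (fun _ => (0 : ℕ)) π with hV
    have hsuf : ∀ σ : List (CounterOp C), σ <:+ π → σ ++ [op] <:+ π ++ [op] := by
      rintro σ ⟨t, rfl⟩
      exact ⟨t, by simp⟩
    cases op with
    | inc d =>
      by_cases hc : c = d
      · subst hc
        obtain ⟨σ, e, m, hσ, hT, hle⟩ := ih c
        refine ⟨σ ++ [CounterOp.inc c], e, m + 1, hsuf σ hσ, ?_, ?_⟩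
        · simpa using hT.join (TransfersWith.inc_cons (c := c) (TransfersWith.zero (Transfers_nil.mpr rfl)))
        · simp [applyOps, applyOp, Function.update]; omega
      · obtain ⟨σ, e, m, hσ, hT, hle⟩ := ih c
        refine ⟨σ ++ [CounterOp.inc d], e, m, hsuf σ hσ, hT.extend (by exact ⟨c, rfl, rfl⟩), ?_⟩
        simpa [applyOps, applyOp, Function.update, hc] using hle
    | reset d =>
      by_cases hc : c = d
      · subst hc
        refine ⟨[], c, 0, List.nil_suffix, .zero rfl, ?_⟩
        simp [applyOps, applyOp, Function.update]
      · obtain ⟨σ, e, m, hσ, hT, hle⟩ := ih c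
        refine ⟨σ ++ [CounterOp.reset d], e, m, hsuf σ hσ,
          hT.extend ⟨c, ⟨rfl, hc⟩, rfl⟩, ?_⟩
        simpa [applyOps, applyOp, Function.update, hc] using hle
    | max d c₀ c₁ =>
      by_cases hc : c = d
      · subst hc
        have hval : applyOps V [CounterOp.max c c₀ c₁] c = Nat.max (V c₀) (V c₁) := by
          simp [applyOps, applyOp, Function.update]
        rcases le_total (V c₀) (V c₁) with hle01 | hle01
        · obtain ⟨σ, e, m, hσ, hT, hle⟩ := ih c₁
          refine ⟨σ ++ [CounterOp.max c c₀ c₁], e, m, hsuf σ hσ,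
            hT.extend ⟨c, Or.inr ⟨Or.inr rfl, rfl⟩, rfl⟩, ?_⟩
          rw [hval]; exact (Nat.max_le.mpr ⟨hle01.trans hle, hle⟩)
        · obtain ⟨σ, e, m, hσ, hT, hle⟩ := ih c₀
          refine ⟨σ ++ [CounterOp.max c c₀ c₁], e, m, hsuf σ hσ,
            hT.extend ⟨c, Or.inr ⟨Or.inl rfl, rfl⟩, rfl⟩, ?_⟩
          rw [hval]; exact (Nat.max_le.mpr ⟨hle, hle01.trans hle⟩)
      · obtain ⟨σ, e, m, hσ, hT, hle⟩ := ih c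
        refine ⟨σ ++ [CounterOp.max d c₀ c₁], e, m, hsuf σ hσ,
          hT.extend ⟨c, Or.inl ⟨rfl, hc⟩, rfl⟩, ?_⟩
        simpa [applyOps, applyOp, Function.update, hc] using hle

end Aux2
section Aux3

open MaxAutomaton

variable {S Q C : Type*} [DecidableEq C] (A : MaxAutomaton S Q C)

theorem valSeq_eq (α : ℕ → S) (n : ℕ) :
    A.valSeq α n = applyOps (fun _ => 0) (A.labelSeq α n) := by
  induction n with
  | zero => rfl
  | succ n ih => rw [valSeq, labelSeq, applyOps_append, ih]

/-- boundedness of a counter value along the run, in terms of suffix traces -/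
theorem valSeq_le_iff (α : ℕ → S) (c : C) (B : ℕ) (n : ℕ) :
    A.valSeq α n c ≤ B ↔
      ∀ σ e m, σ <:+ A.labelSeq α n → TransfersWith σ e c m → m ≤ B := by
  rw [valSeq_eq]
  constructor
  · rintro h σ e m ⟨u, hu⟩ hT
    have h1 := TransfersWith_le hT (applyOps (fun _ => 0) u)
    rw [← hu, applyOps_append] at h
    omega
  · intro h
    obtain ⟨σ, e, m, hσ, hT, hle⟩ := exists_suffix_trace (A.labelSeq α n) c
    exact hle.trans (h σ e m hσ hT)

/-- extended step over append -/
theorem extStep_append (q : Q) (u v : List S) :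
    A.extStep q (u ++ v) = A.extStep (A.extStep q u) v := by
  induction u generalizing q with
  | nil => rfl
  | cons a u ih => simp [extStep, ih]

theorem labelsFrom_append (q : Q) (u v : List S) :
    A.labelsFrom q (u ++ v) = A.labelsFrom q u ++ A.labelsFrom (A.extStep q u) v := by
  induction u generalizing q with
  | nil => rfl
  | cons a u ih => simp [labelsFrom, extStep, ih]

theorem labelsFrom_take (q : Q) (w : List S) (t : ℕ) :
    A.labelsFrom q (w.take t) = (A.labelsFrom q w).take t := by
  induction w generalizing q t with
  | nil => simp [labelsFrom]
  | cons a w ih =>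
    cases t with
    | zero => simp [labelsFrom]
    | succ t => simp [labelsFrom, ih]

theorem labelsFrom_length (q : Q) (w : List S) :
    (A.labelsFrom q w).length = w.length := by
  induction w generalizing q with
  | nil => rfl
  | cons a w ih => simp [labelsFrom, ih]

/-- run description along a word given letterwise -/
theorem run_eq [Nonempty S] (α : ℕ → S) (w : List S)
    (hagree : ∀ j < w.length, α j = w.getD j (Classical.arbitrary S)) :
    ∀ n ≤ w.length,
      A.stateAt α n = A.extStep A.init (w.take n) ∧
      A.labelSeq α n = flatLabels (A.labelsFrom A.init (w.take n)) := by
  intro n hn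
  induction n with
  | zero => exact ⟨rfl, rfl⟩
  | succ n ih =>
    obtain ⟨hs, hl⟩ := ih (by omega)
    have hlt : n < w.length := by omega
    have htake : w.take (n + 1) = w.take n ++ [w[n]] := (List.take_concat_get' w n hlt).symm
    have hα : α n = w[n] := by
      rw [hagree n hlt]
      exact List.getD_eq_getElem w _ hlt
    constructor
    · rw [stateAt, hs, htake, extStep_append, hα]; rfl
    · rw [labelSeq, hl, htake, labelsFrom_append A A.init (w.take n) [w[n]], flatLabels_append,
        hs, hα]
      simp [flatLabels, labelsFrom]

end Aux3
section Aux4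

open MaxAutomaton

theorem listPrefix_length_mono {A : Type*} (u : ℕ → List A) {a b : ℕ} (h : a ≤ b) :
    (listPrefix u a).length ≤ (listPrefix u b).length :=
  (listPrefix_prefix u h).length_le

theorem flattenInf_eq {A : Type*} [Nonempty A] (u : ℕ → List A) {k n : ℕ}
    (h : n < (listPrefix u k).length) :
    flattenInf u n = (listPrefix u k).getD n (Classical.arbitrary A) := by
  have hex : ∃ k, n < (listPrefix u k).length := ⟨k, h⟩
  rw [flattenInf, dif_pos hex]
  have hc := hex.choose_spec
  rcases le_total hex.choose k with hle | hle
  · obtain ⟨t, ht⟩ := listPrefix_prefix u hle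
    rw [← ht, List.getD_append _ _ _ _ hc]
  · obtain ⟨t, ht⟩ := listPrefix_prefix u hle
    rw [← ht, List.getD_append _ _ _ _ h]

theorem listPrefix_length_unbounded {A : Type*} {x : ℕ → List A}
    (hx : ∀ N, ∃ i, N ≤ i ∧ x i ≠ []) :
    ∀ B, ∃ k, B < (listPrefix x k).length := by
  intro B
  induction B with
  | zero =>
    obtain ⟨i, _, hi⟩ := hx 0
    refine ⟨i + 1, ?_⟩
    have : (x i).length ≠ 0 := fun h => hi (List.eq_nil_of_length_eq_zero h)
    simp [listPrefix]; omega
  | succ B ih =>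
    obtain ⟨k, hk⟩ := ih
    obtain ⟨i, hik, hi⟩ := hx k
    refine ⟨i + 1, ?_⟩
    have h1 : (listPrefix x k).length ≤ (listPrefix x i).length :=
      listPrefix_length_mono x hik
    have : (x i).length ≠ 0 := fun h => hi (List.eq_nil_of_length_eq_zero h)
    simp [listPrefix]; omega

theorem listPrefix_block_split {A : Type*} (x : ℕ → List A) {i k : ℕ} (h : i < k) :
    listPrefix x k = listPrefix x i ++ (x i ++ listPrefix (fun j => x (i + 1 + j)) (k - (i+1))) := by
  have e1 : listPrefix x k = listPrefix x (i + (k - i)) := by congr 1; omega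
  rw [e1, listPrefix_add]
  congr 1
  have e2 : k - i = (k - (i+1)) + 1 := by omega
  rw [e2, listPrefix_succ_left]
  congr 1
  apply listPrefix_congr
  intro j hj
  show x (i + (1 + j)) = x (i + 1 + j)
  congr 1
  omega

theorem take_listPrefix {A : Type*} (x : ℕ → List A) {i k n : ℕ} (hik : i < k)
    (h1 : (listPrefix x i).length ≤ n) (h2 : n ≤ (listPrefix x i).length + (x i).length) :
    (listPrefix x k).take n = listPrefix x i ++ (x i).take (n - (listPrefix x i).length) := by
  rw [listPrefix_block_split x hik, List.take_append,
    List.take_of_length_le h1, List.take_append, Nat.sub_sub,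
    Nat.sub_eq_zero_of_le h2, List.take_zero, List.append_nil]

variable {S Q C : Type*} [DecidableEq C] [Nonempty S] (A : MaxAutomaton S Q C)

/-- the state at the start of block `i` -/
def qState (x : ℕ → List S) (i : ℕ) : Q := A.extStep A.init (listPrefix x i)

/-- the label sequence of block `i` -/
def blockLabels (x : ℕ → List S) (i : ℕ) : List (List (CounterOp C)) :=
  A.labelsFrom (qState A x i) (x i)

theorem labelsFrom_listPrefix (x : ℕ → List S) (k : ℕ) :
    A.labelsFrom A.init (listPrefix x k) = listPrefix (blockLabels A x) k := by
  induction k with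
  | zero => rfl
  | succ k ih => rw [listPrefix, labelsFrom_append, ih, listPrefix, blockLabels, qState]

/-- every position of the run on `flattenInf x` corresponds to a block decomposition -/
theorem labelSeq_block (x : ℕ → List S) (hx : ∀ N, ∃ i, N ≤ i ∧ x i ≠ []) (n : ℕ) :
    ∃ i p, p <+: blockLabels A x i ∧
      A.labelSeq (flattenInf x) n = flatLabels (listPrefix (blockLabels A x) i ++ p) := by
  obtain ⟨k, hk⟩ := listPrefix_length_unbounded hx n
  have hagree : ∀ j < (listPrefix x k).length,
      flattenInf x j = (listPrefix x k).getD j (Classical.arbitrary S) :=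
    fun j hj => flattenInf_eq x hj
  obtain ⟨-, hl⟩ := run_eq A (flattenInf x) (listPrefix x k) hagree n (le_of_lt hk)
  -- find the block containing position n
  set i := Nat.findGreatest (fun i => (listPrefix x i).length ≤ n) k with hi
  have hspec : (listPrefix x i).length ≤ n :=
    Nat.findGreatest_spec (P := fun i => (listPrefix x i).length ≤ n) (Nat.zero_le k)
      (by simp [listPrefix])
  have hik : i < k := by
    rcases Nat.lt_or_ge i k with h | h
    · exact h
    · exfalso
      have hkk : i ≤ k := Nat.findGreatest_le (P := fun i => (listPrefix x i).length ≤ n) k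
      have heq : i = k := le_antisymm hkk h
      rw [heq] at hspec
      omega
  have hnext : n < (listPrefix x (i + 1)).length := by
    by_contra hcon
    push_neg at hcon
    exact Nat.findGreatest_is_greatest (Nat.lt_succ_self i) hik hcon
  have hnext' : n < (listPrefix x i).length + (x i).length := by
    have : (listPrefix x (i+1)).length = (listPrefix x i).length + (x i).length := by
      rw [listPrefix, List.length_append]
    omega
  set t := n - (listPrefix x i).length with ht
  have hsplit : (listPrefix x k).take n = listPrefix x i ++ (x i).take t :=
    take_listPrefix x hik hspec (by omega)
  refine ⟨i, (blockLabels A x i).take t, List.take_prefix t _, ?_⟩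
  rw [hl, hsplit, labelsFrom_append, labelsFrom_listPrefix, labelsFrom_take, flatLabels_append]
  rw [← qState, ← blockLabels, flatLabels_append]

/-- conversely every block decomposition corresponds to a position of the run -/
theorem block_labelSeq (x : ℕ → List S) (hx : ∀ N, ∃ i, N ≤ i ∧ x i ≠ []) (i : ℕ)
    (p : List (List (CounterOp C))) (hp : p <+: blockLabels A x i) :
    ∃ n, A.labelSeq (flattenInf x) n = flatLabels (listPrefix (blockLabels A x) i ++ p) := by
  have hlen : p.length ≤ (x i).length := by
    have := hp.length_le
    rwa [blockLabels, labelsFrom_length] at this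
  set n := (listPrefix x i).length + p.length with hn
  obtain ⟨k0, hk0⟩ := listPrefix_length_unbounded hx n
  set k := Nat.max (i+1) k0 with hk
  have hnw : n < (listPrefix x k).length :=
    lt_of_lt_of_le hk0 (listPrefix_length_mono x (Nat.le_max_right _ _))
  have hik : i < k := lt_of_lt_of_le (Nat.lt_succ_self i) (Nat.le_max_left _ _)
  have hagree : ∀ j < (listPrefix x k).length,
      flattenInf x j = (listPrefix x k).getD j (Classical.arbitrary S) :=
    fun j hj => flattenInf_eq x hj
  obtain ⟨-, hl⟩ := run_eq A (flattenInf x) (listPrefix x k) hagree n (le_of_lt hnw)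
  have hsplit : (listPrefix x k).take n = listPrefix x i ++ (x i).take p.length := by
    have h := take_listPrefix x hik (n := n) (by omega) (by omega)
    have e : n - (listPrefix x i).length = p.length := by omega
    rwa [e] at h
  refine ⟨n, ?_⟩
  rw [hl, hsplit, labelsFrom_append, labelsFrom_listPrefix, labelsFrom_take]
  have hptake : p = (blockLabels A x i).take p.length := List.prefix_iff_eq_take.mp hp
  rw [← qState, ← blockLabels, ← hptake]

end Aux4
section Aux5

variable {C : Type*}

/-- unboundedness of traces of counter `c` along the block sequence `l` -/
def UnbTrace (l : ℕ → List (List (CounterOp C))) (c : C) : Prop :=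
  ∀ B, ∃ i p σ e m, p <+: l i ∧ σ <:+ flatLabels (listPrefix l i ++ p) ∧
    TransfersWith σ e c m ∧ B ≤ m

/-- decomposition of a suffix trace over a sequence of blocks -/
theorem trace_decomp :
    ∀ (n : ℕ) (g : ℕ → List (List (CounterOp C))) (p : List (List (CounterOp C)))
      (σ : List (CounterOp C)) (e c : C) (B : ℕ),
      σ <:+ flatLabels (listPrefix g n ++ p) → TransfersWith σ e c B →
      (∃ σ', σ' <:+ flatLabels p ∧ ∃ e', TransfersWith σ' e' c B) ∨
      (∃ j, j < n ∧ ∃ d m₁ m₂, m₁ + m₂ = B ∧ CondSuffixTrace (g j) d m₁ ∧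
        TransfersWith (flatLabels (listPrefix (fun t => g (j + 1 + t)) (n - (j+1)) ++ p)) d c m₂) := by
  intro n
  induction n with
  | zero =>
    intro g p σ e c B hσ hT
    exact .inl ⟨σ, by simpa [listPrefix] using hσ, e, hT⟩
  | succ n ih =>
    intro g p σ e c B hσ hT
    rw [listPrefix_succ_left, List.append_assoc, flatLabels_append] at hσ
    rcases suffix_append_cases hσ with hσ' | ⟨u, hu, rfl⟩
    · -- σ within the later blocks
      rcases ih (fun j => g (1 + j)) p σ e c B hσ' hT with h | ⟨j, hj, d, m₁, m₂, hm, hst, hrest⟩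
      · exact .inl h
      · refine .inr ⟨j + 1, by omega, d, m₁, m₂, hm, ?_, ?_⟩
        · have hg : g (1 + j) = g (j + 1) := congrArg g (Nat.add_comm 1 j)
          rwa [← hg]
        · have hfun : listPrefix (fun t => g (1 + (j + 1 + t))) (n - (j+1)) =
              listPrefix (fun t => g (j + 1 + 1 + t)) (n + 1 - (j + 1 + 1)) := by
            have e1 : n - (j+1) = n + 1 - (j+1+1) := by omega
            rw [← e1]
            apply listPrefix_congr
            intro t ht
            exact congrArg g (by omega)
          rwa [hfun] at hrest
    · -- σ begins inside block `g 0`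
      obtain ⟨d, m₁, m₂, hm, h1, h2⟩ := hT.split
      refine .inr ⟨0, by omega, d, m₁, m₂, hm, ⟨u, hu, e, h1⟩, ?_⟩
      simp only [Nat.zero_add, Nat.add_sub_cancel]
      exact h2

/-- decomposition of a transfer over a sequence of blocks -/
theorem transfer_decomp :
    ∀ (n : ℕ) (g : ℕ → List (List (CounterOp C))) (p : List (List (CounterOp C)))
      (d c : C) (m : ℕ),
      TransfersWith (flatLabels (listPrefix g n ++ p)) d c m →
      ∃ (es : ℕ → C) (ms : ℕ → ℕ), es 0 = d ∧
        (∀ t < n, CondTransfer (g t) (es t) (es (t+1)) (ms t)) ∧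
        TransfersWith (flatLabels p) (es n) c (ms n) ∧
        (Finset.range (n+1)).sum ms = m := by
  intro n
  induction n with
  | zero =>
    intro g p d c m hT
    exact ⟨fun _ => d, fun _ => m, rfl, fun t ht => absurd ht (by omega), by simpa [listPrefix] using hT,
      by simp⟩
  | succ n ih =>
    intro g p d c m hT
    rw [listPrefix_succ_left, List.append_assoc, flatLabels_append] at hT
    obtain ⟨f, m₁, m₂, hm, h1, h2⟩ := hT.split
    obtain ⟨es, ms, hes0, hmid, hfin, hsum⟩ := ih (fun j => g (1 + j)) p f c m₂ h2
    refine ⟨fun t => match t with | 0 => d | t + 1 => es t,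
      fun t => match t with | 0 => m₁ | t + 1 => ms t, rfl, ?_, hfin, ?_⟩
    · intro t ht
      match t with
      | 0 => simpa [CondTransfer, hes0] using h1
      | t + 1 =>
        have h := hmid t (by omega)
        have hgt : g (1 + t) = g (t + 1) := congrArg g (Nat.add_comm 1 t)
        rwa [hgt] at h
    · rw [Finset.sum_range_succ']
      have e : ∀ t, (fun t => match t with | 0 => m₁ | t+1 => ms t) (t+1) = ms t :=
        fun t => rfl
      simp only [e]
      rw [hsum]
      omega

/-- reconstruction of a transfer from per-block transfers -/
theorem transfer_recon :
    ∀ (n : ℕ) (g : ℕ → List (List (CounterOp C))) (p : List (List (CounterOp C)))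
      (c : C) (es : ℕ → C) (ms : ℕ → ℕ),
      (∀ t < n, CondTransfer (g t) (es t) (es (t+1)) (ms t)) →
      TransfersWith (flatLabels p) (es n) c (ms n) →
      TransfersWith (flatLabels (listPrefix g n ++ p)) (es 0) c ((Finset.range (n+1)).sum ms) := by
  intro n
  induction n with
  | zero =>
    intro g p c es ms _ hfin
    simpa [listPrefix] using hfin
  | succ n ih =>
    intro g p c es ms hmid hfin
    have h0 : TransfersWith (flatLabels (g 0)) (es 0) (es 1) (ms 0) := hmid 0 (by omega)
    have hrest : TransfersWith (flatLabels (listPrefix (fun j => g (1 + j)) n ++ p)) (es 1) c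
        ((Finset.range (n+1)).sum (fun t => ms (t+1))) := by
      apply ih (fun j => g (1 + j)) p c (fun t => es (t + 1)) (fun t => ms (t + 1))
      · intro t ht
        have h := hmid (t + 1) (by omega)
        have hgt : g (1 + t) = g (t + 1) := congrArg g (Nat.add_comm 1 t)
        rwa [hgt]
      · exact hfin
    have := h0.join hrest
    rw [listPrefix_succ_left, List.append_assoc, flatLabels_append]
    have hsum : (Finset.range (n+2)).sum ms =
        ms 0 + (Finset.range (n+1)).sum (fun t => ms (t+1)) := by
      rw [Finset.sum_range_succ']
      omega
    rwa [hsum]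

end Aux5
section Aux6

variable {C : Type*}

theorem flatLabels_prefix {u v : List (List (CounterOp C))} (h : u <+: v) :
    flatLabels u <+: flatLabels v := by
  obtain ⟨t, rfl⟩ := h
  rw [flatLabels_append]
  exact ⟨flatLabels t, rfl⟩

theorem suffix_flat_extend {π b : List (CounterOp C)} (h : π <:+ b) (a : List (CounterOp C)) :
    π <:+ a ++ b := by
  obtain ⟨t, rfl⟩ := h
  exact ⟨a ++ t, by simp⟩

theorem UnbTrace_transfer {l l' : ℕ → List (List (CounterOp C))} {r : ℕ → ℕ}
    (hmono : Monotone r) (hunb : ∀ B, ∃ i, B < r i)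
    (heq : ∀ i, EqOps (r i) (l i) (l' i)) {c : C}
    (h : UnbTrace l c) : UnbTrace l' c := by
  intro B
  obtain ⟨I, hI⟩ := hunb B
  have hBI : B ≤ r I := le_of_lt hI
  set M := incCount (flatLabels (listPrefix l I)) with hM
  obtain ⟨i, p, σ, e, m, hp, hσ, hT, hm⟩ := h (B + M + 1)
  -- the trace must reach beyond block I
  have hiI : I ≤ i := by
    by_contra hcon
    push_neg at hcon
    have h1 : listPrefix l i ++ p <+: listPrefix l I := by
      refine List.IsPrefix.trans ?_ (listPrefix_prefix l hcon)
      rw [listPrefix]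
      obtain ⟨t, ht⟩ := hp
      exact ⟨t, by rw [List.append_assoc, ht]⟩
    have h2 : incCount σ ≤ M := by
      rw [hM]
      exact le_trans (incCount_le_of_sublist hσ.sublist)
        (incCount_le_of_sublist (flatLabels_prefix h1).sublist)
    have := hT.le_incCount
    omega
  -- split off the first I blocks
  set n := i - I with hn
  have hiIn : i = I + n := by omega
  have hTfl : flatLabels (listPrefix l i ++ p) =
      flatLabels (listPrefix l I) ++ flatLabels (listPrefix (fun j => l (I + j)) n ++ p) := by
    rw [hiIn, listPrefix_add, List.append_assoc, flatLabels_append]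
  -- extract a trace of length exactly B inside the blocks from I on
  have hkey : ∃ σ₂ e₂, σ₂ <:+ flatLabels (listPrefix (fun j => l (I + j)) n ++ p) ∧
      TransfersWith σ₂ e₂ c B := by
    rw [hTfl] at hσ
    rcases suffix_append_cases hσ with hcase | ⟨u, hu, rfl⟩
    · obtain ⟨σ₂, e₂, hσ₂, hT₂⟩ := hT.trunc (B := B) (by omega)
      exact ⟨σ₂, e₂, hσ₂.trans hcase, hT₂⟩
    · obtain ⟨d, m₁, m₂, hm12, hT1, hT2⟩ := hT.split
      have hm1 : m₁ ≤ M := le_trans hT1.le_incCount (incCount_le_of_sublist hu.sublist)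
      obtain ⟨σ₂, e₂, hσ₂, hT₂⟩ := hT2.trunc (B := B) (by omega)
      exact ⟨σ₂, e₂, hσ₂.trans (List.suffix_refl _), hT₂⟩
  obtain ⟨σ₂, e₂, hσ₂, hT₂⟩ := hkey
  -- decompose over the blocks
  rcases trace_decomp n (fun j => l (I + j)) p σ₂ e₂ c B hσ₂ hT₂ with
    ⟨σ', hσ'p, e', hT'⟩ | ⟨j, hj, d, m₁, m₂, hm12, hst, hrest⟩
  · -- trace entirely inside the last partial block: use CondInfixTrace
    have hit : CondInfixTrace (l i) c B := ⟨p, hp.isInfix, σ', hσ'p, e', hT'⟩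
    have hBi : B ≤ r i := hBI.trans (hmono hiI)
    have hit' : CondInfixTrace (l' i) c B := ((heq i c c B hBi).1).mp hit
    obtain ⟨μ, hμ, π, hπ, htr⟩ := hit'
    obtain ⟨u', v', huv⟩ := hμ
    refine ⟨i, u' ++ μ, π, ?_⟩
    obtain ⟨e'', htr'⟩ := htr
    refine ⟨e'', B, ⟨v', by rw [← huv, List.append_assoc]⟩, ?_, htr', le_refl B⟩
    rw [flatLabels_append, flatLabels_append]
    exact suffix_flat_extend (suffix_flat_extend hπ _) _
  · -- trace spanning several blocks
    set K := I + j + 1 with hK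
    set n' := n - (j + 1) with hn'
    have hiK : i = K + n' := by omega
    -- rewrite the remaining transfer over blocks K, K+1, ...
    have hrest' : TransfersWith
        (flatLabels (listPrefix (fun t => l (K + t)) n' ++ p)) d c m₂ := by
      have hfun : listPrefix (fun t => (fun j => l (I + j)) (j + 1 + t)) (n - (j+1)) =
          listPrefix (fun t => l (K + t)) n' := by
        rw [← hn']
        apply listPrefix_congr
        intro t ht
        exact congrArg l (by omega)
      rwa [hfun] at hrest
    obtain ⟨es, ms, hes0, hmid, hfin, hsum⟩ :=
      transfer_decomp n' (fun t => l (K + t)) p d c m₂ hrest'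
    -- bounds
    have hms : ∀ t, t ≤ n' → ms t ≤ m₂ := by
      intro t ht
      rw [← hsum]
      exact Finset.single_le_sum (f := ms) (fun _ _ => Nat.zero_le _)
        (Finset.mem_range.mpr (by omega))
    -- transfer each block condition to the primed side
    have hst' : CondSuffixTrace (l' (I + j)) d m₁ := by
      have hb : m₁ ≤ r (I + j) := le_trans (by omega) (hBI.trans (hmono (by omega)))
      exact ((heq (I + j) d d m₁ hb).2.1).mp hst
    have hmid' : ∀ t < n', CondTransfer (l' (K + t)) (es t) (es (t+1)) (ms t) := by
      intro t ht
      have hb : ms t ≤ r (K + t) :=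
        le_trans (le_trans (hms t (by omega)) (by omega)) (hBI.trans (hmono (by omega)))
      exact ((heq (K + t) (es t) (es (t+1)) (ms t) hb).2.2.1).mp (hmid t ht)
    have hfin' : CondPrefixTransfer (l' i) (es n') c (ms n') := by
      have hb : ms n' ≤ r i := le_trans (le_trans (hms n' (le_refl _)) (by omega))
        (hBI.trans (hmono hiI))
      exact ((heq i (es n') c (ms n') hb).2.2.2).mp ⟨p, hp, hfin⟩
    obtain ⟨p', hp', hTp'⟩ := hfin'
    -- reconstruct the transfer on the primed side
    have hbig : TransfersWith (flatLabels (listPrefix (fun t => l' (K + t)) n' ++ p')) d c m₂ := by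
      have := transfer_recon n' (fun t => l' (K + t)) p' c es ms hmid' hTp'
      rwa [hes0, hsum] at this
    obtain ⟨π₁, hπ₁, e₁, hTπ₁⟩ := hst'
    refine ⟨i, p', π₁ ++ flatLabels (listPrefix (fun t => l' (K + t)) n' ++ p'), e₁, B, hp', ?_,
      by rw [← hm12]; exact hTπ₁.join hbig, le_refl B⟩
    -- suffix property
    obtain ⟨w, hw⟩ := hπ₁
    have hsplit : flatLabels (listPrefix l' i ++ p') =
        (flatLabels (listPrefix l' (I + j)) ++ w) ++
          (π₁ ++ flatLabels (listPrefix (fun t => l' (K + t)) n' ++ p')) := by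
      rw [hiK, listPrefix_add, hK]
      rw [show I + j + 1 = (I + j) + 1 from rfl, listPrefix]
      rw [List.append_assoc, List.append_assoc, flatLabels_append, flatLabels_append, ← hw]
      simp [List.append_assoc]
    exact ⟨_, hsplit.symm⟩

end Aux6
section Final

open MaxAutomaton Filter

theorem limsup_coe_lt_top_iff (f : ℕ → ℕ) :
    Filter.limsup (fun n => ((f n : ℕ) : ℕ∞)) Filter.atTop < ⊤ ↔ ∃ B, ∀ n, f n ≤ B := by
  constructor
  · intro h
    obtain ⟨B, hB⟩ := WithTop.ne_top_iff_exists.mp h.ne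
    have hB' : (B : ℕ∞) = Filter.limsup (fun n => ((f n : ℕ) : ℕ∞)) Filter.atTop := by
      exact_mod_cast hB
    have hev : ∀ᶠ n in Filter.atTop, ((f n : ℕ) : ℕ∞) < ((B + 1 : ℕ) : ℕ∞) :=
      Filter.eventually_lt_of_limsup_lt
        (by rw [← hB']; exact_mod_cast Nat.lt_add_one B)
    obtain ⟨N, hN⟩ := Filter.eventually_atTop.mp hev
    refine ⟨B + (Finset.range N).sup f, fun n => ?_⟩
    rcases Nat.lt_or_ge n N with hn | hn
    · exact le_trans (Finset.le_sup (Finset.mem_range.mpr hn)) (by omega)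
    · have h1 := hN n hn
      have h2 : f n < B + 1 := by exact_mod_cast h1
      omega
  · rintro ⟨B, hB⟩
    have h1 : Filter.limsup (fun n => ((f n : ℕ) : ℕ∞)) Filter.atTop ≤ (B : ℕ∞) :=
      Filter.limsup_le_of_le (by isBoundedDefault)
        (Filter.Eventually.of_forall fun n => by exact_mod_cast hB n)
    exact lt_of_le_of_lt h1 (WithTop.coe_lt_top B)

variable {S Q C : Type*} [DecidableEq C]

theorem bounded_iff_not_unbTrace (A : MaxAutomaton S Q C) (α : ℕ → S) (c : C)
    (l : ℕ → List (List (CounterOp C)))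
    (hcorr1 : ∀ n, ∃ i p, p <+: l i ∧ A.labelSeq α n = flatLabels (listPrefix l i ++ p))
    (hcorr2 : ∀ i p, p <+: l i → ∃ n, A.labelSeq α n = flatLabels (listPrefix l i ++ p)) :
    (∃ B, ∀ n, A.valSeq α n c ≤ B) ↔ ¬ UnbTrace l c := by
  constructor
  · rintro ⟨B, hB⟩ hU
    obtain ⟨i, p, σ, e, m, hp, hσ, hT, hm⟩ := hU (B + 1)
    obtain ⟨n, hn⟩ := hcorr2 i p hp
    have := (valSeq_le_iff A α c B n).mp (hB n) σ e m (by rw [hn]; exact hσ) hT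
    omega
  · intro hU
    by_contra hcon
    push_neg at hcon
    apply hU
    intro B
    obtain ⟨n, hn⟩ := hcon B
    have h2 : ¬ ∀ σ e m, σ <:+ A.labelSeq α n → TransfersWith σ e c m → m ≤ B := fun hh =>
      absurd ((valSeq_le_iff A α c B n).mpr hh) (by omega)
    push_neg at h2
    obtain ⟨σ, e, m, hσ, hT, hm⟩ := h2
    obtain ⟨i, p, hp, hl⟩ := hcorr1 n
    exact ⟨i, p, σ, e, m, hp, by rw [← hl]; exact hσ, hT, by omega⟩

theorem EqOps.symm' {m : ℕ} {u v : List (List (CounterOp C))} (h : EqOps m u v) :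
    EqOps m v u := fun c d m' hm' =>
  ⟨(h c d m' hm').1.symm, (h c d m' hm').2.1.symm, (h c d m' hm').2.2.1.symm,
    (h c d m' hm').2.2.2.symm⟩

end Final
/-- Replacing each block `x i` of an infinite concatenation by a block `x' i` that is
`≡_{r i}`-equivalent, for a rate `(r i)`, does not change membership in `L(A)`. -/
theorem swap_equivalent_blocks
    {S Q C : Type*} [Fintype S] [Fintype Q] [Fintype C] [DecidableEq C] [Nonempty S]
    (A : MaxAutomaton S Q C) (x x' : ℕ → List S) (r : ℕ → ℕ)
    (hx : ∀ N, ∃ i, N ≤ i ∧ x i ≠ [])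
    (hx' : ∀ N, ∃ i, N ≤ i ∧ x' i ≠ [])
    (hmono : Monotone r) (hunb : ∀ B, ∃ i, B < r i)
    (heq : ∀ i, EqWord A (r i) (x i) (x' i)) :
    flattenInf x ∈ A.Lang ↔ flattenInf x' ∈ A.Lang := by
  have hstate : ∀ i, qState A x i = qState A x' i := by
    intro i
    induction i with
    | zero => rfl
    | succ i ih =>
      show qState A x (i+1) = qState A x' (i+1)
      rw [qState, qState, listPrefix, listPrefix, extStep_append,
        extStep_append, ← qState, ← qState, ih, (heq i).1 (qState A x' i)]
  have heqblocks : ∀ i, EqOps (r i) (blockLabels A x i) (blockLabels A x' i) := by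
    intro i
    rw [blockLabels, blockLabels, hstate i]
    exact (heq i).2 (qState A x' i)
  have hiff : ∀ c : C, UnbTrace (blockLabels A x) c ↔ UnbTrace (blockLabels A x') c :=
    fun c => ⟨UnbTrace_transfer hmono hunb heqblocks,
      UnbTrace_transfer hmono hunb (fun i => (heqblocks i).symm')⟩
  show A.Accepts (flattenInf x) ↔ A.Accepts (flattenInf x')
  rw [MaxAutomaton.Accepts, MaxAutomaton.Accepts]
  have hpred : (fun c => Filter.limsup (fun n => ((A.valSeq (flattenInf x) n c : ℕ) : ℕ∞))
        Filter.atTop < ⊤) =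
      (fun c => Filter.limsup (fun n => ((A.valSeq (flattenInf x') n c : ℕ) : ℕ∞))
        Filter.atTop < ⊤) := by
    funext c
    apply propext
    rw [limsup_coe_lt_top_iff, limsup_coe_lt_top_iff,
      bounded_iff_not_unbTrace A (flattenInf x) c (blockLabels A x)
        (labelSeq_block A x hx) (block_labelSeq A x hx),
      bounded_iff_not_unbTrace A (flattenInf x') c (blockLabels A x')
        (labelSeq_block A x' hx') (block_labelSeq A x' hx')]
    exact not_congr (hiff c)
  rw [hpred]
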